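/- arXiv:1702.07578 — 8 statements merged into one kernel-verified Lean document; each statement's English description precedes it below -/
import Mathlib

section
/- Let T be a list of natural numbers, all < 2^k, let 0 ≤ ℓ ≤ k and p < 2^ℓ. In the level-ℓ stable prefix sort S_ℓ(T), the elements with length-ℓ bit prefix equal to p occupy exactly the contiguous block of positions starting at start(p) = |{j < |T| : prefix(ℓ, T[j]) < p}| of length cnt(p) = |{j < |T| : prefix(ℓ, T[j]) = p}|; that is, taking cnt(p) elements of S_ℓ(T) after dropping the first start(p) elements yields exactly the sublist T.filter(λ c, prefix(ℓ, c) = p). -/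
/-- `brev m c`: the number whose `m`-bit binary representation is the reverse of that of `c`
(bit-reversal `rev_m`). -/
def brev (m c : ℕ) : ℕ := ∑ j ∈ Finset.range m, ((c / 2^j) % 2) * 2^(m-1-j)

/-- `bpre k ℓ c`: the bit prefix of length `ℓ` of a `k`-bit number `c`
(its `ℓ` most significant bits). -/
def bpre (k ℓ c : ℕ) : ℕ := c / 2^(k-ℓ)

/-- `wbit k j c`: the `j`-th bit (from MSB to LSB) of the `k`-bit number `c`. -/
def wbit (k j c : ℕ) : ℕ := (c / 2^(k-1-j)) % 2

/-- Level-`ℓ` stable prefix sort `S_ℓ(T)`: concatenation over `p = 0,…,2^ℓ-1` of the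
sublists of `T` whose length-`ℓ` bit prefix equals `p`. -/
def wsortS (k ℓ : ℕ) (T : List ℕ) : List ℕ :=
  (List.range (2^ℓ)).flatMap (fun p => T.filter (fun c => bpre k ℓ c = p))

/-- Level-`ℓ` stable reversed-prefix sort `R_ℓ(T)`: concatenation over `v = 0,…,2^ℓ-1` of the
sublists of `T` whose reversed length-`ℓ` bit prefix equals `v`. -/
def wsortR (k ℓ : ℕ) (T : List ℕ) : List ℕ :=
  (List.range (2^ℓ)).flatMap (fun v => T.filter (fun c => brev ℓ (bpre k ℓ c) = v))

/-- `wrank b B i`: number of occurrences of `b` among the first `i` entries of `B`. -/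
def wrank (b : ℕ) (B : List ℕ) (i : ℕ) : ℕ := ((B.take i).filter (fun x => x = b)).length

/-- `wselect b B i`: 0-based position in `B` of the `i`-th occurrence of `b`
(occurrences counted starting from `i = 1`). -/
def wselect (b : ℕ) (B : List ℕ) (i : ℕ) : ℕ :=
  ((List.range B.length).filter (fun j => B.getD j 2 = b)).getD (i-1) 0

/-- Unary histogram bit vector `U(T)` of a text over alphabet `[0,σ)`:
`1^{m_0} 0 1^{m_1} 0 ⋯ 0 1^{m_{σ-1}}` where `m_c` is the number of occurrences of `c` in `T`. -/
def unaryHist (σ : ℕ) (T : List ℕ) : List ℕ :=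
  List.intercalate [0] ((List.range σ).map (fun c => List.replicate (T.count c) 1))


lemma wcount_split (f : ℕ → ℕ) (T : List ℕ) (n : ℕ) :
    (T.filter (fun c => f c < n + 1)).length =
      (T.filter (fun c => f c < n)).length + (T.filter (fun c => f c = n)).length := by
  induction T with
  | nil => simp
  | cons a t ih =>
    simp only [List.filter_cons]
    by_cases h1 : f a < n + 1 <;> by_cases h2 : f a < n <;> by_cases h3 : f a = n <;>
      simp at ih <;> simp [h1, h2, h3, ih] <;> omega

lemma wcount_lt (k ℓ : ℕ) (T : List ℕ) (p : ℕ) :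
    (T.filter (fun c => bpre k ℓ c < p)).length =
      (((List.range p).flatMap (fun q => T.filter (fun c => bpre k ℓ c = q)))).length := by
  induction p with
  | zero => simp
  | succ n ih =>
    rw [List.range_succ, List.flatMap_append, List.length_append, ← ih,
      wcount_split (fun c => bpre k ℓ c)]
    simp

theorem wsortS_interval (k : ℕ) (hk : 1 ≤ k) (T : List ℕ) (hT : ∀ c ∈ T, c < 2^k)
    (ℓ p : ℕ) (hℓ : ℓ ≤ k) (hp : p < 2^ℓ) :
    ((wsortS k ℓ T).drop ((T.filter (fun c => bpre k ℓ c < p)).length)).take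
        ((T.filter (fun c => bpre k ℓ c = p)).length) =
      T.filter (fun c => bpre k ℓ c = p) := by
  have hm : 2 ^ ℓ = p + (2 ^ ℓ - p - 1 + 1) := by omega
  set L : ℕ → List ℕ := fun q => T.filter (fun c => bpre k ℓ c = q) with hLdef
  have hrange : List.range (2 ^ ℓ) =
      List.range p ++ (List.range (2 ^ ℓ - p - 1 + 1)).map (p + ·) := by
    conv_lhs => rw [hm, List.range_add]
  rw [wsortS, hrange, List.flatMap_append, wcount_lt k ℓ T p]
  rw [List.drop_left]
  rw [List.range_succ_eq_map, List.map_cons, List.flatMap_cons]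
  simpa using List.take_left (L p) _
end

section
/- Let T be a list of natural numbers, all < 2^k, let 0 ≤ ℓ ≤ k and p < 2^ℓ. In the level-ℓ stable reversed-prefix sort R_ℓ(T), the elements with length-ℓ bit prefix equal to p occupy exactly the contiguous block of positions starting at startR(p) = |{j < |T| : rev_ℓ(prefix(ℓ, T[j])) < rev_ℓ(p)}| of length cnt(p) = |{j < |T| : prefix(ℓ, T[j]) = p}|; that is, taking cnt(p) elements of R_ℓ(T) after dropping the first startR(p) elements yields exactly the sublist T.filter(λ c, prefix(ℓ, c) = p). -/
/-- Bit extraction from a sum of bits. -/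
lemma bitGet : ∀ (m : ℕ) (g : ℕ → ℕ), (∀ i, g i ≤ 1) → ∀ t, t < m →
    (∑ i ∈ Finset.range m, g i * 2^i) / 2^t % 2 = g t := by
  intro m
  induction m with
  | zero => intro g hg t ht; omega
  | succ n ih =>
    intro g hg t ht
    have hS : (∑ i ∈ Finset.range (n+1), g i * 2^i)
        = 2 * (∑ i ∈ Finset.range n, g (i+1) * 2^i) + g 0 := by
      rw [Finset.sum_range_succ' (fun i => g i * 2^i), Finset.mul_sum]
      simp only [pow_zero, mul_one, pow_succ]
      congr 1
      exact Finset.sum_congr rfl fun x _ => by ring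
    rw [hS]
    rcases t with _ | s
    · have := hg 0
      simpa using by omega
    · have h2 : (2 * (∑ i ∈ Finset.range n, g (i+1) * 2^i) + g 0) / 2
          = ∑ i ∈ Finset.range n, g (i+1) * 2^i := by
        have := hg 0; omega
      rw [pow_succ', ← Nat.div_div_eq_div_mul, h2]
      exact ih (fun i => g (i+1)) (fun i => hg (i+1)) s (by omega)

lemma brev_eq (m c : ℕ) :
    brev m c = ∑ i ∈ Finset.range m, ((c / 2^(m-1-i)) % 2) * 2^i := by
  unfold brev
  rw [← Finset.sum_range_reflect (fun j => ((c / 2^j) % 2) * 2^(m-1-j)) m]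
  refine Finset.sum_congr rfl (fun j hj => ?_)
  rw [Finset.mem_range] at hj
  congr 2
  omega

lemma sum_two_pow (m : ℕ) : ∑ i ∈ Finset.range m, 2^i = 2^m - 1 := by
  induction m with
  | zero => simp
  | succ n ih =>
    rw [Finset.sum_range_succ, ih]
    have : 1 ≤ 2^n := Nat.one_le_two_pow
    have : 2^(n+1) = 2 * 2^n := by ring
    omega

lemma brev_lt (m c : ℕ) : brev m c < 2^m := by
  rw [brev_eq]
  have h1 : (∑ i ∈ Finset.range m, ((c / 2^(m-1-i)) % 2) * 2^i)
      ≤ ∑ i ∈ Finset.range m, 2^i := by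
    refine Finset.sum_le_sum (fun i _ => ?_)
    have : (c / 2^(m-1-i)) % 2 ≤ 1 := by omega
    calc ((c / 2^(m-1-i)) % 2) * 2^i ≤ 1 * 2^i := Nat.mul_le_mul_right _ this
    _ = 2^i := one_mul _
  have h2 := sum_two_pow m
  have h3 : 1 ≤ 2^m := Nat.one_le_two_pow
  omega

lemma brev_bit (m c t : ℕ) (ht : t < m) :
    brev m c / 2^t % 2 = (c / 2^(m-1-t)) % 2 := by
  rw [brev_eq]
  exact bitGet m (fun i => (c / 2^(m-1-i)) % 2)
    (fun i => Nat.lt_succ_iff.mp (Nat.mod_lt _ (by norm_num))) t ht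

lemma brev_inj (m a b : ℕ) (ha : a < 2^m) (hb : b < 2^m) (h : brev m a = brev m b) :
    a = b := by
  refine Nat.eq_of_testBit_eq (fun s => ?_)
  rcases Nat.lt_or_ge s m with hs | hs
  · have ht : m - 1 - s < m := by omega
    have h1 := brev_bit m a (m - 1 - s) ht
    have h2 := brev_bit m b (m - 1 - s) ht
    rw [h] at h1
    have hms : m - 1 - (m - 1 - s) = s := by omega
    rw [hms] at h1 h2
    have heq : a / 2^s % 2 = b / 2^s % 2 := h1.symm.trans h2
    rw [Nat.testBit_eq_decide_div_mod_eq, Nat.testBit_eq_decide_div_mod_eq, heq]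
  · have h2s : 2^m ≤ 2^s := Nat.pow_le_pow_right (by norm_num) hs
    rw [Nat.testBit_eq_decide_div_mod_eq, Nat.testBit_eq_decide_div_mod_eq,
      Nat.div_eq_of_lt (by omega), Nat.div_eq_of_lt (by omega)]

lemma filter_split (f : ℕ → ℕ) (n : ℕ) (T : List ℕ) :
    (T.filter (fun c => f c < n)).length + (T.filter (fun c => f c = n)).length
      = (T.filter (fun c => f c < n+1)).length := by
  induction T with
  | nil => simp
  | cons a t ih =>
    simp only [List.filter_cons]
    by_cases h1 : f a < n
    · have h2 : ¬ f a = n := by omega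
      have h3 : f a < n + 1 := by omega
      simp [h1, h2, h3] at ih ⊢
      omega
    · by_cases h2 : f a = n
      · have h3 : f a < n + 1 := by omega
        simp [h1, h2, h3] at ih ⊢
        omega
      · have h3 : ¬ f a < n + 1 := by omega
        simp [h1, h2, h3] at ih ⊢
        omega

lemma flatMap_len (f : ℕ → ℕ) (T : List ℕ) (n : ℕ) :
    ((List.range n).flatMap (fun v => T.filter (fun c => f c = v))).length
      = (T.filter (fun c => f c < n)).length := by
  induction n with
  | zero => simp
  | succ n ih =>
    rw [List.range_succ, List.flatMap_append, List.length_append, ih]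
    simp only [List.flatMap_cons, List.flatMap_nil, List.append_nil]
    exact filter_split f n T

theorem wsortR_interval (k : ℕ) (hk : 1 ≤ k) (T : List ℕ) (hT : ∀ c ∈ T, c < 2^k)
    (ℓ p : ℕ) (hℓ : ℓ ≤ k) (hp : p < 2^ℓ) :
    ((wsortR k ℓ T).drop ((T.filter (fun c => brev ℓ (bpre k ℓ c) < brev ℓ p)).length)).take
        ((T.filter (fun c => bpre k ℓ c = p)).length) =
      T.filter (fun c => bpre k ℓ c = p) := by
  set f : ℕ → ℕ := fun c => brev ℓ (bpre k ℓ c) with hf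
  set V : ℕ := brev ℓ p with hVdef
  have hV : V < 2^ℓ := brev_lt ℓ p
  -- prefix bound
  have hpre : ∀ c ∈ T, bpre k ℓ c < 2^ℓ := by
    intro c hc
    have hck := hT c hc
    have h2k : 2^(k-ℓ) * 2^ℓ = 2^k := by
      rw [← pow_add]; congr 1; omega
    exact Nat.div_lt_of_lt_mul (by rw [h2k]; exact hck)
  -- the block with value V is exactly the set with prefix p
  have hB : T.filter (fun c => f c = V) = T.filter (fun c => bpre k ℓ c = p) := by
    refine List.filter_congr (fun c hc => ?_)
    have h1 := hpre c hc
    simp only [hf, hVdef, decide_eq_decide]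
    constructor
    · intro h; exact brev_inj ℓ _ p h1 hp h
    · intro h; rw [h]
  -- split the range
  have hrange : List.range (2^ℓ)
      = (List.range V ++ [V]) ++ (List.range (2^ℓ - (V+1))).map (fun i => (V+1) + i) := by
    rw [← List.range_succ, ← List.range_add]
    congr 1
    omega
  have hws : wsortR k ℓ T
      = ((List.range V).flatMap (fun v => T.filter (fun c => f c = v)))
        ++ (T.filter (fun c => f c = V)
          ++ ((List.range (2^ℓ - (V+1))).map (fun i => (V+1) + i)).flatMap
              (fun v => T.filter (fun c => f c = v))) := by
    rw [wsortR, hrange, List.flatMap_append, List.flatMap_append]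
    simp [hf]
  have hlen : (T.filter (fun c => brev ℓ (bpre k ℓ c) < brev ℓ p)).length
      = ((List.range V).flatMap (fun v => T.filter (fun c => f c = v))).length := by
    rw [flatMap_len f T V]
  rw [hws, hlen, List.drop_left, hB]
  exact List.take_left
end

section
/- Let T be a list of natural numbers, all < 2^k. For every ℓ with 0 ≤ ℓ < k, applying prefix(ℓ, ·) elementwise to S_{ℓ+1}(T) gives the same list as applying prefix(ℓ, ·) elementwise to S_ℓ(T); i.e., map (λ c, prefix(ℓ, c)) (S_{ℓ+1}(T)) = map (λ c, prefix(ℓ, c)) (S_ℓ(T)), so each level-(ℓ+1) interval of the wavelet tree lies within the corresponding level-ℓ interval. -/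
lemma flat_aux (n : ℕ) (a : ℕ → ℕ) :
    (List.range (2*n)).flatMap (fun p => List.replicate (a p) (p/2))
      = (List.range n).flatMap (fun p => List.replicate (a (2*p) + a (2*p+1)) p) := by
  induction n with
  | zero => simp
  | succ n ih =>
    have h2 : 2*(n+1) = (2*n + 1) + 1 := by ring
    rw [h2, List.range_succ, List.range_succ, List.range_succ,
      List.flatMap_append, List.flatMap_append, List.flatMap_append, ih]
    have e1 : (2*n)/2 = n := by omega
    have e2 : (2*n+1)/2 = n := by omega
    simp only [List.flatMap_cons, List.flatMap_nil, List.append_nil, e1, e2,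
      List.replicate_add, List.append_assoc]

lemma filter_split_s8 (l : List ℕ) (f : ℕ → ℕ) (p : ℕ) :
    (l.filter (fun c => f c / 2 = p)).length
      = (l.filter (fun c => f c = 2*p)).length + (l.filter (fun c => f c = 2*p+1)).length := by
  have e1 : (2*p)/2 = p := by omega
  have e2 : (2*p+1)/2 = p := by omega
  induction l with
  | nil => simp
  | cons a t ih =>
    by_cases h : f a / 2 = p
    · rcases (by omega : f a = 2*p ∨ f a = 2*p+1) with h' | h' <;>
        simp [List.filter_cons, h', e1, e2, ih] <;> omega
    · have h1 : f a ≠ 2*p := by omega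
      have h2 : f a ≠ 2*p+1 := by omega
      simp [List.filter_cons, h, h1, h2, ih]

theorem wsortS_map_bpre (k : ℕ) (hk : 1 ≤ k) (T : List ℕ) (hT : ∀ c ∈ T, c < 2^k)
    (ℓ : ℕ) (hℓ : ℓ < k) :
    (wsortS k (ℓ+1) T).map (fun c => bpre k ℓ c) =
      (wsortS k ℓ T).map (fun c => bpre k ℓ c) := by
  have hb : ∀ c, bpre k ℓ c = bpre k (ℓ+1) c / 2 := by
    intro c
    unfold bpre
    have h : k - ℓ = (k - (ℓ+1)) + 1 := by omega
    rw [h, pow_succ, ← Nat.div_div_eq_div_mul]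
  have hL : ∀ p, (T.filter (fun c => bpre k (ℓ+1) c = p)).map (fun c => bpre k ℓ c)
      = List.replicate (T.filter (fun c => bpre k (ℓ+1) c = p)).length (p/2) := by
    intro p
    rw [List.eq_replicate_iff]
    refine ⟨by simp, ?_⟩
    intro b hb'
    obtain ⟨c, hc, rfl⟩ := List.mem_map.mp hb'
    have hmem := List.of_mem_filter hc
    simp only [decide_eq_true_eq] at hmem
    rw [hb c, hmem]
  have hR : ∀ p, (T.filter (fun c => bpre k ℓ c = p)).map (fun c => bpre k ℓ c)
      = List.replicate (T.filter (fun c => bpre k ℓ c = p)).length p := by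
    intro p
    rw [List.eq_replicate_iff]
    refine ⟨by simp, ?_⟩
    intro b hb'
    obtain ⟨c, hc, rfl⟩ := List.mem_map.mp hb'
    have hmem := List.of_mem_filter hc
    simpa using hmem
  unfold wsortS
  rw [List.map_flatMap, List.map_flatMap]
  simp only [hL, hR]
  have h2 : 2^(ℓ+1) = 2 * 2^ℓ := by ring
  rw [h2, flat_aux]
  congr 1
  funext p
  congr 1
  have := filter_split_s8 T (fun c => bpre k (ℓ+1) c) p
  simp only [← hb] at this
  omega
end

section
/- Let T be a list of natural numbers, all < 2^k, and let T' be T sorted in nondecreasing order. For every 0 ≤ ℓ ≤ k and every 0 ≤ i < |T|, prefix(ℓ, T'[i]) = prefix(ℓ, S_ℓ(T)[i]); i.e., the element at position i of the fully sorted text has the same length-ℓ bit prefix as the element at position i of the level-ℓ stable prefix sort. -/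
lemma sum_onehot (n m q : ℕ) (hq : q < n) :
    ((List.range n).map (fun p => if q = p then m else 0)).sum = m := by
  induction n with
  | zero => omega
  | succ n ih =>
    rw [List.range_succ, List.map_append, List.sum_append]
    rcases Nat.lt_or_ge q n with h | h
    · simp [ih h, Nat.ne_of_lt h]
    · have : q = n := by omega
      subst this
      have : ((List.range q).map (fun p => if q = p then m else 0)).sum = 0 := by
        rw [List.sum_eq_zero]
        intro x hx
        simp only [List.mem_map, List.mem_range] at hx
        obtain ⟨p, hp, rfl⟩ := hx
        simp [Nat.ne_of_gt hp]
      simp [this]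

lemma wsortS_perm (k ℓ : ℕ) (T : List ℕ) (hT : ∀ c ∈ T, c < 2^k) (hℓ : ℓ ≤ k) :
    (wsortS k ℓ T).Perm T := by
  rw [List.perm_iff_count]
  intro x
  rcases Decidable.em (x ∈ T) with hx | hx
  · have hxlt : bpre k ℓ x < 2^ℓ := by
      have := hT x hx
      unfold bpre
      rw [Nat.div_lt_iff_lt_mul (Nat.two_pow_pos _), ← pow_add]
      calc x < 2^k := this
        _ ≤ 2^(ℓ + (k - ℓ)) := by rw [Nat.add_sub_cancel' hℓ]
    rw [wsortS, List.count_flatMap]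
    have hmap : (List.map (List.count x ∘ fun p => T.filter fun c => bpre k ℓ c = p)
        (List.range (2^ℓ))) = (List.range (2^ℓ)).map
          (fun p => if bpre k ℓ x = p then List.count x T else 0) := by
      apply List.map_congr_left
      intro p _
      simp only [Function.comp]
      rcases Decidable.em (bpre k ℓ x = p) with h | h
      · rw [if_pos h, List.count_filter (by simp [h])]
      · rw [if_neg h, List.count_eq_zero.2]
        intro hmem
        have := List.of_mem_filter hmem
        simp at this
        exact h this
    rw [hmap, sum_onehot _ _ _ hxlt]
  · rw [List.count_eq_zero.2 hx, List.count_eq_zero.2]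
    intro hmem
    rw [wsortS, List.mem_flatMap] at hmem
    obtain ⟨p, _, hm⟩ := hmem
    exact hx (List.mem_of_mem_filter hm)

lemma wsortS_map_sorted (k ℓ : ℕ) (T : List ℕ) :
    ((wsortS k ℓ T).map (bpre k ℓ)).Pairwise (· ≤ ·) := by
  rw [List.pairwise_map, wsortS, List.pairwise_flatMap]
  constructor
  · intro p _
    apply List.Pairwise.imp_of_mem _ (List.pairwise_of_forall_mem_list (fun x _ y _ => True.intro))
    intro a b ha hb _
    have ha' := List.of_mem_filter ha
    have hb' := List.of_mem_filter hb
    simp only [decide_eq_true_eq] at ha' hb'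
    rw [ha', hb']
  · apply List.Pairwise.imp_of_mem _ List.pairwise_lt_range
    intro p q hp hq hpq x hx y hy
    have hx' := List.of_mem_filter hx
    have hy' := List.of_mem_filter hy
    simp only [decide_eq_true_eq] at hx' hy'
    rw [hx', hy']
    exact Nat.le_of_lt hpq

lemma mergeSort_map_sorted (k ℓ : ℕ) (T : List ℕ) :
    ((T.mergeSort (fun a b => decide (a ≤ b))).map (bpre k ℓ)).Pairwise (· ≤ ·) := by
  rw [List.pairwise_map]
  have := List.pairwise_mergeSort (le := fun a b : ℕ => decide (a ≤ b))
    (by intro a b c; simp; omega) (by intro a b; simp; omega) T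
  apply this.imp
  intro a b h
  simp only [decide_eq_true_eq] at h
  exact Nat.div_le_div_right h


theorem bpre_sorted_eq_bpre_wsortS (k : ℕ) (hk : 1 ≤ k) (T : List ℕ)
    (hT : ∀ c ∈ T, c < 2^k) (ℓ i : ℕ) (hℓ : ℓ ≤ k) (hi : i < T.length) :
    bpre k ℓ ((T.mergeSort (fun a b => decide (a ≤ b))).getD i 0) =
      bpre k ℓ ((wsortS k ℓ T).getD i 0) := by
  set L1 := T.mergeSort (fun a b => decide (a ≤ b)) with hL1
  set L2 := wsortS k ℓ T with hL2
  have hperm : (L1.map (bpre k ℓ)).Perm (L2.map (bpre k ℓ)) :=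
    ((List.mergeSort_perm T _).trans (wsortS_perm k ℓ T hT hℓ).symm).map _
  have heq : L1.map (bpre k ℓ) = L2.map (bpre k ℓ) :=
    List.Perm.eq_of_pairwise' (mergeSort_map_sorted k ℓ T) (wsortS_map_sorted k ℓ T) hperm
  have h1 : i < L1.length := by rw [hL1, List.length_mergeSort]; exact hi
  have h2 : i < L2.length := by rw [(wsortS_perm k ℓ T hT hℓ).length_eq]; exact hi
  rw [List.getD_eq_getElem _ _ h1, List.getD_eq_getElem _ _ h2]
  have h1' : i < (L1.map (bpre k ℓ)).length := by simpa using h1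
  have h2' : i < (L2.map (bpre k ℓ)).length := by simpa using h2
  calc bpre k ℓ L1[i] = (L1.map (bpre k ℓ))[i]'h1' := by rw [List.getElem_map]
    _ = (L2.map (bpre k ℓ))[i]'h2' := List.getElem_of_eq heq _
    _ = bpre k ℓ L2[i] := by rw [List.getElem_map]
end

section
/- Let T be a list of natural numbers, all < 2^k. Then the level-k stable prefix sort S_k(T) equals the nondecreasing sort of T; in particular S_k(T) is sorted in nondecreasing order and is a permutation of T. -/
lemma sum_ite_range (x c n : ℕ) :
    ((List.range n).map (fun p => if x = p then c else 0)).sum = if x < n then c else 0 := by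
  induction n with
  | zero => simp
  | succ n ih =>
    rw [List.range_succ, List.map_append, List.sum_append, ih]
    simp only [List.map_cons, List.map_nil, List.sum_cons, List.sum_nil]
    rcases lt_trichotomy x n with h | h | h
    · rw [if_pos h, if_pos (Nat.lt_succ_of_lt h), if_neg (by omega)]; omega
    · subst h; simp
    · rw [if_neg (by omega), if_neg (by omega), if_neg (by omega)]; omega

lemma wsortS_last_perm (k : ℕ) (T : List ℕ) (hT : ∀ c ∈ T, c < 2^k) :
    (wsortS k k T).Perm T := by
  rw [List.perm_iff_count]
  intro x
  rw [wsortS, List.count_flatMap]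
  have hb : ∀ c : ℕ, bpre k k c = c := by
    intro c; simp [bpre]
  have hcf : ∀ p : ℕ, List.count x (T.filter (fun c => bpre k k c = p))
      = if x = p then List.count x T else 0 := by
    intro p
    split
    · next h =>
      subst h
      exact List.count_filter (by simp [hb])
    · next h =>
      rw [List.count_eq_zero]
      intro hx
      rw [List.mem_filter] at hx
      exact h (by simpa [hb] using hx.2)
  have : ((List.range (2^k)).map (List.count x ∘ fun p => T.filter (fun c => bpre k k c = p))).sum
      = ((List.range (2^k)).map (fun p => if x = p then List.count x T else 0)).sum := by
    congr 1
    exact List.map_congr_left (fun p _ => hcf p)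
  rw [this, sum_ite_range]
  by_cases hx : x ∈ T
  · rw [if_pos (hT x hx)]
  · rw [List.count_eq_zero_of_not_mem hx]; simp

lemma wsortS_last_sorted (k : ℕ) (T : List ℕ) :
    (wsortS k k T).Pairwise (· ≤ ·) := by
  have hb : ∀ c : ℕ, bpre k k c = c := by
    intro c; simp [bpre]
  rw [wsortS, List.pairwise_flatMap]
  constructor
  · intro p _
    apply List.pairwise_of_forall_mem_list
    intro a ha b hbm
    rw [List.mem_filter] at ha hbm
    have h1 : a = p := by simpa [hb] using ha.2
    have h2 : b = p := by simpa [hb] using hbm.2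
    omega
  · refine (List.pairwise_lt_range (n := _)).imp ?_
    intro p q hpq x hx y hy
    rw [List.mem_filter] at hx hy
    have h1 : x = p := by simpa [hb] using hx.2
    have h2 : y = q := by simpa [hb] using hy.2
    omega

theorem wsortS_last_level (k : ℕ) (hk : 1 ≤ k) (T : List ℕ) (hT : ∀ c ∈ T, c < 2^k) :
    wsortS k k T = T.mergeSort (fun a b => decide (a ≤ b)) ∧
      (wsortS k k T).Pairwise (· ≤ ·) ∧ (wsortS k k T).Perm T := by
  have hperm := wsortS_last_perm k T hT
  have hsorted := wsortS_last_sorted k T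
  refine ⟨?_, hsorted, hperm⟩
  exact List.Perm.eq_of_pairwise' hsorted (List.pairwise_mergeSort' (· ≤ ·) T)
    (hperm.trans (List.mergeSort_perm T _).symm)
end

section
/- Let T be a list of natural numbers over the alphabet [0, σ) with σ ≥ 1, let n = |T|, let U = U(T) be its unary histogram bit vector, and let T' be T sorted in nondecreasing order. For every 0 ≤ i < n, rank_0(U, select_1(U, i+1)) = T'[i]; i.e., the number of zeros of U preceding its (i+1)-th one equals the (i+1)-th smallest element of T. -/
open List

/-- positions of ones -/
def onesPos (B : List ℕ) : List ℕ := (List.range B.length).filter (fun j => B.getD j 2 = 1)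

lemma onesPos_append (A B : List ℕ) :
    onesPos (A ++ B) = onesPos A ++ (onesPos B).map (A.length + ·) := by
  unfold onesPos
  rw [length_append, range_add, filter_append, filter_map]
  congr 1
  · apply filter_congr
    intro x hx
    rw [mem_range] at hx
    rw [getD_append _ _ _ _ hx]
  · congr 1
    apply filter_congr
    intro x hx
    rw [mem_range] at hx
    simp only [Function.comp_apply]
    rw [getD_append_right _ _ _ _ (by omega)]
    simp

lemma onesPos_replicate_one (k : ℕ) : onesPos (replicate k 1) = range k := by
  unfold onesPos
  rw [length_replicate]
  apply filter_eq_self.2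
  intro x hx
  rw [mem_range] at hx
  rw [getD_eq_getElem _ _ (by simpa using hx)]
  simp

lemma onesPos_zero : onesPos [0] = [] := by decide

lemma onesPos_lt (B : List ℕ) (i : ℕ) (h : i < (onesPos B).length) :
    (onesPos B).getD i 0 < B.length := by
  rw [getD_eq_getElem _ _ h]
  have := List.getElem_mem h
  unfold onesPos at this
  have := (mem_filter.1 this).1
  rwa [mem_range] at this

lemma wrank_append_le (b : ℕ) (A B : List ℕ) (i : ℕ) (h : i ≤ A.length) :
    wrank b (A ++ B) i = wrank b A i := by
  unfold wrank
  rw [take_append_of_le_length h]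

lemma wrank_append_add (b : ℕ) (A B : List ℕ) (j : ℕ) :
    wrank b (A ++ B) (A.length + j) = wrank b A A.length + wrank b B j := by
  unfold wrank
  rw [take_append, take_length, filter_append, length_append]
  rw [take_of_length_le (by omega), Nat.add_sub_cancel_left]

lemma wrank_length (b : ℕ) (A : List ℕ) : wrank b A A.length = (A.filter (fun x => x = b)).length := by
  unfold wrank; rw [take_length]

lemma wrank_replicate_one (j k : ℕ) : wrank 0 (replicate k 1) j = 0 := by
  unfold wrank
  rw [take_replicate]
  simp

/-- abstract unary histogram for count function m -/
def Ub (m : ℕ → ℕ) (σ : ℕ) : List ℕ :=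
  List.intercalate [0] ((List.range σ).map fun c => List.replicate (m c) 1)

/-- abstract sorted list -/
def Sl (m : ℕ → ℕ) (σ : ℕ) : List ℕ := (List.range σ).flatMap fun c => List.replicate (m c) c

lemma intercalate_concat (L : List (List ℕ)) (x : List ℕ) (h : L ≠ []) :
    List.intercalate [0] (L ++ [x]) = List.intercalate [0] L ++ [0] ++ x := by
  induction L with
  | nil => exact absurd rfl h
  | cons a L ih =>
    cases L with
    | nil => simp [List.intercalate, List.intersperse]
    | cons b L =>
      have : ((a :: b :: L) ++ [x]) = a :: ((b :: L) ++ [x]) := rfl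
      rw [this]
      have h1 : ∀ (M : List (List ℕ)) (c : List ℕ), List.intercalate [0] (c :: M) =
          if M = [] then c else c ++ [0] ++ List.intercalate [0] M := by
        intro M c
        cases M with
        | nil => simp [List.intercalate]
        | cons d M => simp [List.intercalate, List.intersperse_cons_cons]
      rw [h1 ((b :: L) ++ [x]) a, if_neg (by simp), ih (by simp), h1 (b :: L) a,
        if_neg (by simp)]
      simp [List.append_assoc]

lemma Ub_succ (m : ℕ → ℕ) (s : ℕ) (hs : 1 ≤ s) :
    Ub m (s+1) = (Ub m s ++ [0]) ++ replicate (m s) 1 := by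
  unfold Ub
  rw [range_succ, map_append]
  simp only [map_cons, map_nil]
  rw [intercalate_concat _ _ (by
    cases s with
    | zero => omega
    | succ t => simp [range_succ])]

lemma Sl_succ (m : ℕ → ℕ) (s : ℕ) :
    Sl m (s+1) = Sl m s ++ replicate (m s) s := by
  unfold Sl
  rw [range_succ, flatMap_append]
  simp

lemma Ub_one (m : ℕ → ℕ) : Ub m 1 = replicate (m 0) 1 := by
  unfold Ub
  rw [show List.range 1 = [0] by rfl]
  simp [List.intercalate]

lemma Sl_one (m : ℕ → ℕ) : Sl m 1 = replicate (m 0) 0 := by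
  unfold Sl
  rw [show List.range 1 = [0] by rfl]
  simp

lemma Ub_length (m : ℕ → ℕ) (σ : ℕ) (hσ : 1 ≤ σ) :
    (Ub m σ).length = (Sl m σ).length + (σ - 1) := by
  induction σ, hσ using Nat.le_induction with
  | base => rw [Ub_one, Sl_one]; simp
  | succ s hs ih =>
    rw [Ub_succ m s hs, Sl_succ]
    simp only [length_append, length_replicate, length_cons, length_nil, ih]
    omega

lemma Ub_zeros (m : ℕ → ℕ) (σ : ℕ) (hσ : 1 ≤ σ) :
    ((Ub m σ).filter (fun x => x = 0)).length = σ - 1 := by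
  induction σ, hσ using Nat.le_induction with
  | base => rw [Ub_one]; simp
  | succ s hs ih =>
    rw [Ub_succ m s hs]
    rw [filter_append, filter_append, length_append, length_append, ih]
    have h2 : (filter (fun x => decide (x = 0)) (replicate (m s) 1)).length = 0 := by simp
    have h1 : (filter (fun x => decide (x = 0)) [0]).length = 1 := rfl
    rw [h1, h2]
    omega

lemma onesPos_Ub_length (m : ℕ → ℕ) (σ : ℕ) (hσ : 1 ≤ σ) :
    (onesPos (Ub m σ)).length = (Sl m σ).length := by
  induction σ, hσ using Nat.le_induction with
  | base => rw [Ub_one, Sl_one, onesPos_replicate_one]; simp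
  | succ s hs ih =>
    rw [Ub_succ m s hs, Sl_succ, onesPos_append, onesPos_append, onesPos_zero,
      onesPos_replicate_one]
    simp [ih]

lemma Ub_main (m : ℕ → ℕ) (σ : ℕ) (hσ : 1 ≤ σ) (i : ℕ) (hi : i < (Sl m σ).length) :
    wrank 0 (Ub m σ) ((onesPos (Ub m σ)).getD i 0) = (Sl m σ).getD i 0 := by
  induction σ, hσ using Nat.le_induction with
  | base =>
    rw [Ub_one, Sl_one, onesPos_replicate_one] at *
    rw [length_replicate] at hi
    rw [getD_eq_getElem _ _ (by simpa using hi), getElem_range, wrank_replicate_one,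
      getD_eq_getElem _ _ (by simpa using hi), getElem_replicate]
  | succ s hs ih =>
    have hOP : onesPos (Ub m (s+1)) =
        onesPos (Ub m s) ++ (range (m s)).map ((Ub m s).length + 1 + ·) := by
      rw [Ub_succ m s hs, onesPos_append, onesPos_append, onesPos_zero, onesPos_replicate_one]
      simp
    have hN := onesPos_Ub_length m s hs
    have hUlen := Ub_length m s hs
    rw [Sl_succ] at hi
    simp only [length_append, length_replicate] at hi
    by_cases hcase : i < (Sl m s).length
    · -- inside the prefix
      have h1 : ((onesPos (Ub m (s+1))).getD i 0) = (onesPos (Ub m s)).getD i 0 := by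
        rw [hOP, getD_append _ _ _ _ (by omega)]
      rw [h1]
      have hp := onesPos_lt (Ub m s) i (by omega)
      rw [Ub_succ m s hs, wrank_append_le _ _ _ _ (by simp only [length_append, length_cons, length_nil]; omega),
        wrank_append_le _ _ _ _ (by omega), Sl_succ, getD_append _ _ _ _ hcase]
      exact ih hcase
    · -- in the last block
      push_neg at hcase
      have hj : i - (Sl m s).length < m s := by omega
      have h1 : ((onesPos (Ub m (s+1))).getD i 0) = i + s := by
        rw [hOP, getD_append_right _ _ _ _ (by omega), hN,
          getD_eq_getElem _ _ (by simpa using hj), getElem_map, getElem_range]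
        omega
      rw [h1]
      have h2 : i + s = ((Ub m s ++ [0]).length) + (i + s - (Ub m s).length - 1) := by
        simp only [length_append, length_cons, length_nil]
        omega
      rw [Ub_succ m s hs, h2, wrank_append_add, wrank_replicate_one, wrank_length,
        filter_append]
      have h3 : (Sl m (s+1)).getD i 0 = s := by
        rw [Sl_succ, getD_append_right _ _ _ _ hcase,
          getD_eq_getElem _ _ (by simpa using hj), getElem_replicate]
      rw [h3]
      simp only [length_append, Ub_zeros m s hs]
      simp
      omega

lemma count_Sl (m : ℕ → ℕ) (σ a : ℕ) :
    (Sl m σ).count a = if a < σ then m a else 0 := by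
  induction σ with
  | zero => simp [Sl]
  | succ s ih =>
    rw [Sl_succ, count_append, ih, count_replicate]
    by_cases h : a = s
    · subst h; simp
    · have h1 : (s == a) = false := beq_eq_false_iff_ne.2 (Ne.symm h)
      rw [h1]
      have h2 : (a < s + 1) ↔ (a < s) := by omega
      simp [h2]

lemma sorted_Sl (m : ℕ → ℕ) (σ : ℕ) : List.Pairwise (· ≤ ·) (Sl m σ) := by
  unfold Sl
  rw [flatMap_def, pairwise_flatten]
  constructor
  · intro l hl
    rw [mem_map] at hl
    obtain ⟨c, _, rfl⟩ := hl
    rw [pairwise_replicate]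
    right; exact le_refl c
  · rw [pairwise_map]
    apply (pairwise_lt_range (n := σ)).imp
    intro a b hab x hx y hy
    rw [eq_of_mem_replicate hx, eq_of_mem_replicate hy]
    omega

lemma mergeSort_eq_Sl (σ : ℕ) (T : List ℕ) (hT : ∀ c ∈ T, c < σ) :
    T.mergeSort (fun a b => decide (a ≤ b)) = Sl (fun c => T.count c) σ := by
  refine (fun hp h1 h2 => Perm.eq_of_pairwise' (r := (· ≤ ·)) h1 h2 hp) ?_ ?_ ?_
  · refine (mergeSort_perm T _).trans (perm_iff_count.2 ?_)
    intro a
    rw [count_Sl]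
    by_cases h : a < σ
    · rw [if_pos h]
    · rw [if_neg h]
      exact count_eq_zero.2 (fun hmem => h (hT a hmem))
  · have := pairwise_mergeSort (le := fun a b : ℕ => decide (a ≤ b))
      (fun a b c hab hbc => by simp_all; omega)
      (fun a b => by simp; omega) T
    exact this.imp (fun h => by simpa using h)
  · exact sorted_Sl _ σ

lemma wselect_eq_onesPos (B : List ℕ) (i : ℕ) :
    wselect 1 B (i+1) = (onesPos B).getD i 0 := rfl
theorem unaryHist_rank_select_sorted (σ : ℕ) (hσ : 1 ≤ σ) (T : List ℕ)
    (hT : ∀ c ∈ T, c < σ) (i : ℕ) (hi : i < T.length) :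
    wrank 0 (unaryHist σ T) (wselect 1 (unaryHist σ T) (i+1)) =
      (T.mergeSort (fun a b => decide (a ≤ b))).getD i 0 := by
  have hU : unaryHist σ T = Ub (fun c => T.count c) σ := rfl
  have hS := mergeSort_eq_Sl σ T hT
  have hlen : (Sl (fun c => T.count c) σ).length = T.length := by
    rw [← hS]; exact (mergeSort_perm T _).length_eq
  rw [hU, hS, wselect_eq_onesPos]
  exact Ub_main _ σ hσ i (by omega)
end

section
/- Let T be a list of natural numbers over the alphabet [0, σ) with σ ≥ 1, and let U = U(T) be its unary histogram bit vector. For every r with 1 ≤ r ≤ σ − 1, rank_1(U, select_0(U, r)) = |{j < |T| : T[j] < r}|; i.e., the number of ones of U preceding its r-th zero equals the number of text positions holding a character smaller than r. -/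
def zpos (B : List ℕ) : List ℕ := (List.range B.length).filter (fun j => B.getD j 2 = 0)

lemma zpos_append (A C : List ℕ) :
    zpos (A ++ C) = zpos A ++ (zpos C).map (fun j => A.length + j) := by
  unfold zpos
  rw [List.length_append, List.range_add, List.filter_append]
  congr 1
  · apply List.filter_congr
    intro j hj
    rw [List.mem_range] at hj
    rw [List.getD_append _ _ _ _ hj]
  · rw [List.filter_map]
    congr 1
    apply List.filter_congr
    intro j hj
    simp only [Function.comp_apply]
    rw [List.getD_append_right _ _ _ _ (Nat.le_add_right _ _), Nat.add_sub_cancel_left]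

lemma zpos_cons (a : ℕ) (C : List ℕ) :
    zpos (a :: C) = (if a = 0 then [0] else []) ++ (zpos C).map Nat.succ := by
  have h : a :: C = [a] ++ C := rfl
  rw [h, zpos_append]
  congr 1
  · unfold zpos
    simp [List.filter]
    split <;> simp_all
  · simp [Nat.succ_eq_add_one, Nat.add_comm]

lemma zpos_length (A : List ℕ) :
    (zpos A).length = (A.filter (fun x => x = 0)).length := by
  induction A with
  | nil => rfl
  | cons a C ih =>
    rw [zpos_cons, List.filter_cons]
    simp only [List.length_append, List.length_map, ih]
    by_cases h : a = 0 <;> simp [h] <;> omega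

lemma wselect_eq (A C : List ℕ) (r : ℕ) (hr : 1 ≤ r)
    (hA : (A.filter (fun x => x = 0)).length = r - 1) :
    wselect 0 (A ++ 0 :: C) r = A.length := by
  have hZ : (zpos A).length = r - 1 := by rw [zpos_length, hA]
  show (zpos (A ++ 0 :: C)).getD (r-1) 0 = A.length
  rw [zpos_append, zpos_cons]
  simp only [if_pos rfl, List.singleton_append, List.map_cons]
  rw [List.getD_append_right _ _ _ _ hZ.le, hZ, Nat.sub_self]
  rfl

lemma wrank_take (A C : List ℕ) :
    wrank 1 (A ++ C) A.length = (A.filter (fun x => x = 1)).length := by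
  unfold wrank
  rw [List.take_left]

lemma intercalate_cons (a : List ℕ) (L : List (List ℕ)) (h : L ≠ []) :
    List.intercalate [0] (a :: L) = a ++ 0 :: List.intercalate [0] L := by
  obtain ⟨b, t, rfl⟩ := List.exists_cons_of_ne_nil h
  simp [List.intercalate]

lemma intercalate_append (L1 L2 : List (List ℕ)) (h1 : L1 ≠ []) (h2 : L2 ≠ []) :
    List.intercalate [0] (L1 ++ L2) =
      List.intercalate [0] L1 ++ 0 :: List.intercalate [0] L2 := by
  induction L1 with
  | nil => exact absurd rfl h1
  | cons a t ih =>
    cases t with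
    | nil =>
      rw [List.cons_append, List.nil_append, intercalate_cons _ _ h2]
      simp [List.intercalate]
    | cons b s =>
      rw [List.cons_append, intercalate_cons _ _ (by simp),
        intercalate_cons _ _ (by simp), ih (by simp)]
      simp

lemma count_intercalate (L : List (List ℕ)) (hL : ∀ l ∈ L, ∀ x ∈ l, x = 1) (h : L ≠ []) :
    ((List.intercalate [0] L).filter (fun x => x = 0)).length = L.length - 1 ∧
    ((List.intercalate [0] L).filter (fun x => x = 1)).length = (L.map List.length).sum := by
  induction L with
  | nil => exact absurd rfl h
  | cons a t ih =>
    have ha : ∀ x ∈ a, x = 1 := hL a (by simp)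
    have ha0 : (a.filter (fun x => x = 0)).length = 0 := by
      simp only [List.length_eq_zero_iff, List.filter_eq_nil_iff]
      intro x hx; simp [ha x hx]
    have ha1 : (a.filter (fun x => x = 1)).length = a.length := by
      rw [List.length_filter_eq_length_iff]
      intro x hx; simp [ha x hx]
    cases t with
    | nil => simp [List.intercalate, ha0, ha1]
    | cons b s =>
      obtain ⟨ih0, ih1⟩ := ih (fun l hl => hL l (List.mem_cons_of_mem _ hl)) (by simp)
      rw [intercalate_cons _ _ (by simp)]
      constructor
      · rw [List.filter_append, List.filter_cons, List.length_append]
        simp [ha0, ih0, List.length_cons]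
      · rw [List.filter_append, List.filter_cons, List.length_append]
        simp [ha1, ih1, List.map_cons, List.sum_cons]

lemma count_sum (T : List ℕ) (r : ℕ) :
    ((List.range r).map (fun c => T.count c)).sum = (T.filter (fun c => c < r)).length := by
  induction r with
  | zero => simp
  | succ r ih =>
    rw [List.range_succ, List.map_append, List.sum_append]
    simp only [List.map_cons, List.map_nil, List.sum_cons, List.sum_nil, ih]
    clear ih
    induction T with
    | nil => simp
    | cons x t iht =>
      rw [List.filter_cons, List.filter_cons, List.count_cons]
      simp only [Nat.lt_add_one_iff] at iht ⊢
      by_cases h1 : x < r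
      · have h2 : x < r + 1 := by omega
        have h3 : ¬ (x = r) := by omega
        simp [h1, h2, h3, iht, Nat.le_of_lt h1]; omega
      · by_cases h2 : x = r
        · simp [h1, h2, iht]; omega
        · have h3 : ¬ (x < r + 1) := by omega
          simp [h1, h2, h3, show ¬ x ≤ r by omega]
          omega

theorem unaryHist_rank_one_select_zero (σ : ℕ) (hσ : 1 ≤ σ) (T : List ℕ)
    (hT : ∀ c ∈ T, c < σ) (r : ℕ) (hr1 : 1 ≤ r) (hr2 : r ≤ σ - 1) :
    wrank 1 (unaryHist σ T) (wselect 0 (unaryHist σ T) r) =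
      (T.filter (fun c => c < r)).length := by
  set blk : ℕ → List ℕ := fun c => List.replicate (T.count c) 1 with hblk
  set L1 : List (List ℕ) := (List.range r).map blk with hL1
  set L2 : List (List ℕ) := ((List.range (σ - r)).map (fun d => blk (r + d))) with hL2
  have hrσ : r ≤ σ := by omega
  have hsplit : (List.range σ).map blk = L1 ++ L2 := by
    rw [← Nat.add_sub_cancel' hrσ, List.range_add, List.map_append, List.map_map]
    rfl
  have hU : unaryHist σ T = List.intercalate [0] L1 ++ 0 :: List.intercalate [0] L2 := by
    rw [unaryHist, hsplit]
    apply intercalate_append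
    · simp [hL1]; omega
    · simp [hL2]; omega
  have hones : ∀ l ∈ L1, ∀ x ∈ l, x = 1 := by
    intro l hl x hx
    rw [hL1, List.mem_map] at hl
    obtain ⟨c, _, rfl⟩ := hl
    exact List.eq_of_mem_replicate hx
  have hL1ne : L1 ≠ [] := by simp [hL1]; omega
  obtain ⟨hc0, hc1⟩ := count_intercalate L1 hones hL1ne
  have hlen : L1.length = r := by simp [hL1]
  rw [hU, wselect_eq _ _ r hr1 (by rw [hc0, hlen]), wrank_take, hc1, hL1]
  rw [List.map_map]
  have : (List.length ∘ blk) = fun c => T.count c := by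
    funext c; simp [hblk]
  rw [this, count_sum]
end

section
/- Let T be a list of natural numbers over the alphabet [0, σ) with σ ≥ 1 and σ ≤ 2^k, and let U = U(T) be its unary histogram bit vector. For every ℓ with 0 ≤ ℓ ≤ k and every bp with 1 ≤ bp·2^{k−ℓ} ≤ σ − 1, rank_1(U, select_0(U, bp·2^{k−ℓ})) = |{j < |T| : prefix(ℓ, T[j]) < bp}|; i.e., padding the bit prefix bp with k−ℓ zeros and applying select/rank on U yields the starting position of the interval of prefix class bp on level ℓ of the wavelet tree. -/
section Aux

private lemma intercalate_cons_cons (a b : List ℕ) (l : List (List ℕ)) :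
    List.intercalate [0] (a :: b :: l) = a ++ 0 :: List.intercalate [0] (b :: l) := by
  simp [List.intercalate]

private lemma intercalate_snoc (L : List (List ℕ)) (hL : L ≠ []) (x : List ℕ) :
    List.intercalate [0] (L ++ [x]) = List.intercalate [0] L ++ 0 :: x := by
  induction L with
  | nil => simp at hL
  | cons a l ih =>
    cases l with
    | nil => simp [List.intercalate]
    | cons b l' =>
      have ih' := ih (by simp)
      simp only [List.cons_append] at ih' ⊢
      rw [intercalate_cons_cons, intercalate_cons_cons, ih']
      simp

private lemma uh_one (T : List ℕ) : unaryHist 1 T = List.replicate (T.count 0) 1 := by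
  simp [unaryHist, List.range_succ, List.intercalate]

private lemma uh_succ (T : List ℕ) (n : ℕ) (hn : 1 ≤ n) :
    unaryHist (n+1) T = unaryHist n T ++ 0 :: List.replicate (T.count n) 1 := by
  unfold unaryHist
  rw [List.range_succ, List.map_append, List.map_singleton, intercalate_snoc]
  simp only [ne_eq, List.map_eq_nil_iff, List.range_eq_nil]
  omega

private lemma uh_len (T : List ℕ) : ∀ n, 1 ≤ n →
    (unaryHist n T).length + 1 = (∑ c ∈ Finset.range n, T.count c) + n := by
  intro n hn
  induction n, hn using Nat.le_induction with
  | base => simp [uh_one]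
  | succ n hn ih =>
    rw [uh_succ T n hn, Finset.sum_range_succ]
    simp only [List.length_append, List.length_cons, List.length_replicate]
    omega

private lemma uh_ones (T : List ℕ) : ∀ n, 1 ≤ n →
    ((unaryHist n T).filter (fun x => x = 1)).length = ∑ c ∈ Finset.range n, T.count c := by
  intro n hn
  induction n, hn using Nat.le_induction with
  | base => simp [uh_one]
  | succ n hn ih =>
    rw [uh_succ T n hn, Finset.sum_range_succ, List.filter_append, List.length_append, ih]
    simp

private lemma uh_prefix (T : List ℕ) (n : ℕ) (hn : 1 ≤ n) : ∀ σ, n < σ →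
    ∃ tail, unaryHist σ T = unaryHist n T ++ 0 :: tail := by
  intro σ hσ
  induction σ, hσ using Nat.le_induction with
  | base => exact ⟨_, uh_succ T n hn⟩
  | succ σ hσ ih =>
    obtain ⟨tail, htail⟩ := ih
    refine ⟨tail ++ 0 :: List.replicate (T.count σ) 1, ?_⟩
    rw [uh_succ T σ (by omega), htail]
    simp

private lemma uh_zeros (T : List ℕ) : ∀ σ, 1 ≤ σ →
    (List.range (unaryHist σ T).length).filter (fun j => (unaryHist σ T).getD j 2 = 0)
      = (List.range (σ-1)).map (fun i => (∑ c ∈ Finset.range (i+1), T.count c) + i) := by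
  intro σ hσ
  induction σ, hσ using Nat.le_induction with
  | base =>
    simp only [Nat.sub_self, List.range_zero, List.map_nil]
    rw [List.filter_eq_nil_iff]
    intro j hj
    rw [uh_one] at hj ⊢
    simp only [List.mem_range, List.length_replicate] at hj
    rw [List.getD_eq_getElem _ _ (by simpa using hj)]
    simp
  | succ σ hσ ih =>
    have hlen := uh_len T σ hσ
    set U := unaryHist σ T with hU
    set m := T.count σ with hm
    rw [uh_succ T σ hσ, ← hU, ← hm]
    have hlen2 : (U ++ 0 :: List.replicate m 1).length = U.length + (m + 1) := by
      simp
    rw [hlen2, List.range_add, List.filter_append]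
    have h1 : (List.range U.length).filter
        (fun j => (U ++ 0 :: List.replicate m 1).getD j 2 = 0)
        = (List.range U.length).filter (fun j => U.getD j 2 = 0) := by
      apply List.filter_congr
      intro j hj
      rw [List.getD_append _ _ _ _ (by simpa using hj)]
    have h2 : ((List.range (m+1)).map (fun x => U.length + x)).filter
        (fun j => (U ++ 0 :: List.replicate m 1).getD j 2 = 0) = [U.length] := by
      rw [List.filter_map]
      have hc : (List.range (m+1)).filter
          ((fun j => decide ((U ++ 0 :: List.replicate m 1).getD j 2 = 0)) ∘
            (fun x => U.length + x))
          = (List.range (m+1)).filter (fun j => j = 0) := by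
        apply List.filter_congr
        intro j hj
        simp only [List.mem_range] at hj
        simp only [Function.comp_apply]
        rw [List.getD_append_right _ _ _ _ (by omega)]
        have : U.length + j - U.length = j := by omega
        rw [this]
        cases j with
        | zero => simp
        | succ i =>
          simp only [List.getD_cons_succ]
          have hg : (List.replicate m 1).getD i 2 = 1 := by
            rw [List.getD_eq_getElem _ _ (by simp; omega)]
            simp
          simp only [hg]
          simp
      rw [hc, List.range_succ_eq_map]
      simp
    rw [h1, h2, ih]
    have hr : List.range (σ + 1 - 1) = List.range (σ - 1) ++ [σ - 1] := by
      have : σ + 1 - 1 = (σ - 1) + 1 := by omega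
      rw [this, List.range_succ]
    rw [hr, List.map_append, List.map_singleton]
    congr 1
    simp only [List.cons.injEq, and_true]
    have : σ - 1 + 1 = σ := by omega
    rw [this]
    omega

private lemma filter_lt_length (T : List ℕ) (N : ℕ) :
    (T.filter (fun c => c < N)).length = ∑ c ∈ Finset.range N, T.count c := by
  induction T with
  | nil => simp
  | cons a t ih =>
    simp only [List.count_cons, Finset.sum_add_distrib, ← ih, beq_iff_eq]
    have : (∑ c ∈ Finset.range N, if a = c then 1 else 0) = if a < N then 1 else 0 := by
      rw [Finset.sum_ite_eq]
      simp
    rw [this, List.filter_cons]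
    by_cases h : a < N <;> simp [h]

end Aux

theorem unaryHist_interval_start (k : ℕ) (hk : 1 ≤ k) (σ : ℕ) (hσ : 1 ≤ σ)
    (hσk : σ ≤ 2^k) (T : List ℕ) (hT : ∀ c ∈ T, c < σ) (ℓ bp : ℕ) (hℓ : ℓ ≤ k)
    (h1 : 1 ≤ bp * 2^(k-ℓ)) (h2 : bp * 2^(k-ℓ) ≤ σ - 1) :
    wrank 1 (unaryHist σ T) (wselect 0 (unaryHist σ T) (bp * 2^(k-ℓ))) =
      (T.filter (fun c => bpre k ℓ c < bp)).length := by
  set N := bp * 2^(k-ℓ) with hN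
  have hσ2 : 2 ≤ σ := by omega
  have hNσ : N < σ := by omega
  have hzeros := uh_zeros T σ hσ
  have hsel : wselect 0 (unaryHist σ T) N
      = (∑ c ∈ Finset.range N, T.count c) + (N - 1) := by
    unfold wselect
    rw [hzeros]
    rw [List.getD_eq_getElem _ _ (by simp; omega)]
    rw [List.getElem_map, List.getElem_range]
    have : N - 1 + 1 = N := by omega
    rw [this]
  obtain ⟨tail, htail⟩ := uh_prefix T N h1 σ hNσ
  have hlenN := uh_len T N h1
  have htake : (unaryHist σ T).take ((∑ c ∈ Finset.range N, T.count c) + (N - 1))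
      = unaryHist N T := by
    have hl : (unaryHist N T).length = (∑ c ∈ Finset.range N, T.count c) + (N - 1) := by
      omega
    rw [htail, ← hl, List.take_left]
  have hrank : wrank 1 (unaryHist σ T) (wselect 0 (unaryHist σ T) N)
      = ∑ c ∈ Finset.range N, T.count c := by
    rw [hsel]
    unfold wrank
    rw [htake, uh_ones T N h1]
  rw [hrank]
  have hfilter : T.filter (fun c => bpre k ℓ c < bp) = T.filter (fun c => c < N) := by
    apply List.filter_congr
    intro c _
    simp only [decide_eq_decide, bpre, hN]
    exact decide_eq_decide.mpr (Nat.div_lt_iff_lt_mul (Nat.pow_pos (a := 2) (by norm_num)))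
  rw [hfilter, filter_lt_length]
end
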